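/- arXiv:2411.15109 — 7 statements merged into one kernel-verified Lean document; each statement's English description precedes it below -/
import Mathlib

section
/- Let H be a hypothesis class (a set of functions from ℕ to {0,1}) and let L be an online learner for H that makes at most d mistakes on every H-realizable sample, for some natural number d. Then for every function f ∈ H there exists a finite sample S consistent with f such that the hypothesis L_S of L after sample S coincides with f on all of ℕ. -/
/-- A sample: a finite sequence of (point, label) pairs. -/
abbrev Sample := List (ℕ × Bool)

/-- A sample is consistent with `f` if `f` agrees with every labeled pair. -/
def Consistent (f : ℕ → Bool) (S : Sample) : Prop := ∀ p ∈ S, f p.1 = p.2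

/-- A sample is realizable by `H` if some function in `H` is consistent with it. -/
def Realizable (H : Set (ℕ → Bool)) (S : Sample) : Prop := ∃ f ∈ H, Consistent f S

/-- A (total) learner maps a sample and a query point to a prediction. -/
abbrev Learner := Sample → ℕ → Bool

/-- Number of sequential prediction mistakes of learner `L` on sample `S`. -/
def mistakes (L : Learner) (S : Sample) : ℕ :=
  (List.range S.length).countP fun i =>
    decide (L (S.take i) (S.getD i (0, false)).1 ≠ (S.getD i (0, false)).2)

/-- Code of a Littlestone tree: association list assigning labels to nodes
(nodes are indexed by the bit-path leading to them; missing nodes get label 0). -/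
abbrev TreeCode := List (List Bool × ℕ)

/-- Label of the node reached by path `p` in the tree coded by `T`. -/
def nodeLabel (T : TreeCode) (p : List Bool) : ℕ := (T.lookup p).getD 0

/-- The sample written along the branch `p` (a list of edge bits) in the tree `T`. -/
def branchSample (T : TreeCode) (p : List Bool) : Sample :=
  (List.range p.length).map fun i => (nodeLabel T (p.take i), p.getD i false)

/-- `H` has Littlestone dimension at most `d`: every Littlestone tree of depth `d+1`
has a leaf whose branch sample is not `H`-realizable. -/
def LdimLe (H : Set (ℕ → Bool)) (d : ℕ) : Prop :=
  ∀ T : TreeCode, ∃ p : List Bool, p.length = d + 1 ∧ ¬ Realizable H (branchSample T p)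

/-- The Littlestone dimension of `H` (`⊤` if infinite). -/
noncomputable def Ldim (H : Set (ℕ → Bool)) : ℕ∞ :=
  sInf ((↑) '' {d : ℕ | LdimLe H d})

/-- `H` has effective Littlestone dimension at most `d`: a total computable function
indicates, in every depth-`(d+1)` Littlestone tree, a leaf that is not `H`-realizable. -/
def EldimLe (H : Set (ℕ → Bool)) (d : ℕ) : Prop :=
  ∃ A : TreeCode → List Bool, Computable A ∧
    ∀ T, (A T).length = d + 1 ∧ ¬ Realizable H (branchSample T (A T))

/-- The effective Littlestone dimension of `H` (`⊤` if infinite). -/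
noncomputable def Eldim (H : Set (ℕ → Bool)) : ℕ∞ :=
  sInf ((↑) '' {d : ℕ | EldimLe H d})

/-- The cylinder induced by a sample: all functions consistent with it. -/
def Cyl (S : Sample) : Set (ℕ → Bool) := {f | Consistent f S}

/-- Effectively open subset of Cantor space: union of a computably enumerated
family of cylinders. -/
def EffOpen (X : Set (ℕ → Bool)) : Prop :=
  ∃ g : ℕ → Sample, Computable g ∧ X = ⋃ n, Cyl (g n)

/-- Effectively closed subset of Cantor space: complement is effectively open. -/
def EffClosed (X : Set (ℕ → Bool)) : Prop := EffOpen Xᶜ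

/-!
If no `f`-consistent sample `S` makes `L_S` equal to `f`, an adversary can always extend an
`f`-consistent sample by a point on which `L` errs, labelled by `f`. After `d + 1` rounds this
gives an `H`-realizable sample on which `L` makes `d + 1` mistakes.
-/

lemma mistakes_append_singleton (L : Learner) (S : Sample) (x : ℕ) (y : Bool) :
    mistakes L (S ++ [(x, y)]) = mistakes L S + if L S x = y then 0 else 1 := by
  unfold mistakes
  rw [List.length_append, List.length_singleton, List.range_succ, List.countP_append]
  congr 1
  · refine List.countP_congr fun i hi => ?_
    rw [List.mem_range] at hi
    rw [List.take_append_of_le_length hi.le, List.getD_append _ _ _ _ hi]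
  · rw [List.countP_singleton, List.take_left, List.getD_append_right _ _ _ _ le_rfl]
    simp

lemma consistent_append_singleton_self {f : ℕ → Bool} {S : Sample} (hS : Consistent f S)
    (x : ℕ) : Consistent f (S ++ [(x, f x)]) := by
  intro p hp
  rcases List.mem_append.mp hp with hp | hp
  · exact hS p hp
  · rw [List.mem_singleton.mp hp]

lemma exists_consistent_mistakes_eq {L : Learner} {f : ℕ → Bool}
    (hL : ∀ S, Consistent f S → ∃ x, L S x ≠ f x) (n : ℕ) :
    ∃ S, Consistent f S ∧ mistakes L S = n := by
  induction n with
  | zero => exact ⟨[], fun _ h => absurd h List.not_mem_nil, rfl⟩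
  | succ n ih =>
    obtain ⟨S, hS, hSn⟩ := ih
    obtain ⟨x, hx⟩ := hL S hS
    refine ⟨S ++ [(x, f x)], consistent_append_singleton_self hS x, ?_⟩
    rw [mistakes_append_singleton, hSn, if_neg hx]

theorem stmt0 (H : Set (ℕ → Bool)) (L : Learner) (d : ℕ)
    (hL : ∀ S : Sample, Realizable H S → mistakes L S ≤ d) :
    ∀ f ∈ H, ∃ S : Sample, Consistent f S ∧ ∀ x, L S x = f x := by
  intro f hf
  by_contra! hf_unlearned
  obtain ⟨S, hS, hSd⟩ := exists_consistent_mistakes_eq hf_unlearned (d + 1)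
  have := hL S ⟨f, hf, hS⟩
  omega
end

section
/- Let H be a hypothesis class that admits a computable online learner L making at most d mistakes on every H-realizable sample. Then every function f ∈ H is computable. -/
/-!
A learner making at most `d` mistakes on the realizable samples `(0, f 0), …, (n-1, f (n-1))`
of `f ∈ H` errs only finitely often along `f`, so from some point `N` on its predictions on
these samples are correct. Hence `f` is computed by a machine that knows `f` on `[0, N)` and
from then on runs `L` on its own previous outputs.
-/

open Filter Finset

def prefixSample (f : ℕ → Bool) (n : ℕ) : Sample :=
  (List.range n).map fun i => (i, f i)

section PrefixSample

variable (f : ℕ → Bool)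

@[simp]
lemma prefixSample_length (n : ℕ) : (prefixSample f n).length = n := by
  simp [prefixSample]

lemma prefixSample_succ (n : ℕ) : prefixSample f (n + 1) = prefixSample f n ++ [(n, f n)] := by
  simp [prefixSample, List.range_succ]

lemma prefixSample_take {i n : ℕ} (h : i ≤ n) : (prefixSample f n).take i = prefixSample f i := by
  simp [prefixSample, ← List.map_take, List.take_range, Nat.min_eq_left h]

lemma prefixSample_getD {i n : ℕ} (h : i < n) (x : ℕ × Bool) :
    (prefixSample f n).getD i x = (i, f i) := by
  rw [List.getD_eq_getElem _ _ (by simpa using h)]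
  simp [prefixSample]

lemma consistent_prefixSample (n : ℕ) : Consistent f (prefixSample f n) := by
  intro p hp
  obtain ⟨i, -, rfl⟩ := List.mem_map.mp hp
  rfl

lemma realizable_prefixSample {H : Set (ℕ → Bool)} (hf : f ∈ H) (n : ℕ) :
    Realizable H (prefixSample f n) :=
  ⟨f, hf, consistent_prefixSample f n⟩

lemma mistakes_prefixSample (L : Learner) (n : ℕ) :
    mistakes L (prefixSample f n) =
      (List.range n).countP fun i => decide (L (prefixSample f i) i ≠ f i) := by
  unfold mistakes
  rw [prefixSample_length]
  refine List.countP_congr fun i hi => ?_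
  have hi : i < n := List.mem_range.mp hi
  rw [prefixSample_take f hi.le, prefixSample_getD f hi]

end PrefixSample

lemma List.countP_range_eq_card_filter (P : ℕ → Prop) [DecidablePred P] (n : ℕ) :
    (List.range n).countP (fun i => decide (P i)) = #{i ∈ Finset.range n | P i} := by
  rw [card_def, filter_val, range_val, Multiset.range, Multiset.filter_coe, Multiset.coe_card,
    List.countP_eq_length_filter]

lemma Nat.eventually_not_of_countP_range_le {P : ℕ → Prop} [DecidablePred P] {d : ℕ}
    (h : ∀ n, (List.range n).countP (fun i => decide (P i)) ≤ d) : ∀ᶠ n in atTop, ¬ P n := by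
  refine not_frequently.mp fun hP => ?_
  obtain ⟨s, hsP, hs⟩ := (Nat.frequently_atTop_iff_infinite.mp hP).exists_subset_card_eq (d + 1)
  obtain ⟨n, hn⟩ := s.exists_nat_subset_range
  have hsub : s ⊆ {i ∈ range n | P i} := fun i hi => mem_filter.mpr ⟨hn hi, hsP hi⟩
  have := (card_le_card hsub).trans ((List.countP_range_eq_card_filter P n).symm.trans_le (h n))
  omega

lemma eventually_predict_eq_of_mistakes_le {L : Learner} {f : ℕ → Bool} {d : ℕ}
    (h : ∀ n, mistakes L (prefixSample f n) ≤ d) :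
    ∀ᶠ n in atTop, L (prefixSample f n) n = f n :=
  (Nat.eventually_not_of_countP_range_le fun n => mistakes_prefixSample f L n ▸ h n).mono
    fun _ => not_not.mp

/-- The label at `n` is `t[n]` while the table `t` lasts, and afterwards `L`'s prediction from
the sample built so far (the default value of `List.getD`). -/
def selfRun (L : Learner) (t : List Bool) : ℕ → Sample
  | 0 => []
  | n + 1 => selfRun L t n ++ [(n, t.getD n (L (selfRun L t n) n))]

lemma computable_getD_predict {L : Learner} (hc : Computable₂ L) (t : List Bool) :
    Computable₂ fun (S : Sample) (n : ℕ) => t.getD n (L S n) :=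
  (Computable.option_getD (Computable.list_getElem?.comp (Computable.const t) Computable.snd)
    (hc.comp Computable.fst Computable.snd)).of_eq fun _ => List.getD_eq_getElem?_getD.symm

lemma computable_selfRun {L : Learner} (hc : Computable₂ L) (t : List Bool) :
    Computable (selfRun L t) := by
  have hstep : Computable₂ fun (_ : ℕ) (p : ℕ × Sample) =>
      p.2 ++ [(p.1, t.getD p.1 (L p.2 p.1))] :=
    Primrec.list_append.to_comp.comp (Computable.snd.comp Computable.snd)
      (Computable.list_cons.comp
        ((Computable.fst.comp Computable.snd).pair
          ((computable_getD_predict hc t).comp (Computable.snd.comp Computable.snd)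
            (Computable.fst.comp Computable.snd)))
        (Computable.const []))
  refine (Computable.nat_rec Computable.id (Computable.const []) hstep).of_eq fun n => ?_
  induction n with
  | zero => rfl
  | succ n ih =>
    simp only [id] at ih ⊢
    rw [selfRun, ← ih]

section Table

variable {L : Learner} {f : ℕ → Bool} {N : ℕ}

lemma getD_table_predict (hN : ∀ n ≥ N, L (prefixSample f n) n = f n) (n : ℕ) :
    ((List.range N).map f).getD n (L (prefixSample f n) n) = f n := by
  by_cases hn : n < N
  · rw [List.getD_eq_getElem _ _ (by simpa using hn)]
    simp
  · rw [List.getD_eq_default _ _ (by simpa using hn)]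
    exact hN n (not_lt.mp hn)

lemma selfRun_table_eq_prefixSample (hN : ∀ n ≥ N, L (prefixSample f n) n = f n) (n : ℕ) :
    selfRun L ((List.range N).map f) n = prefixSample f n := by
  induction n with
  | zero => rfl
  | succ n ih => rw [selfRun, ih, getD_table_predict hN, prefixSample_succ]

end Table

theorem computable_of_eventually_predict_eq {L : Learner} {f : ℕ → Bool} (hc : Computable₂ L)
    (h : ∀ᶠ n in atTop, L (prefixSample f n) n = f n) : Computable f := by
  obtain ⟨N, hN⟩ := eventually_atTop.mp h
  refine ((computable_getD_predict hc ((List.range N).map f)).comp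
    (computable_selfRun hc ((List.range N).map f)) Computable.id).of_eq fun n => ?_
  dsimp only [id]
  rw [selfRun_table_eq_prefixSample hN, getD_table_predict hN]

theorem stmt1 (H : Set (ℕ → Bool)) (L : Learner) (d : ℕ)
    (hc : Computable₂ L)
    (hL : ∀ S : Sample, Realizable H S → mistakes L S ≤ d) :
    ∀ f ∈ H, Computable f := fun f hf =>
  computable_of_eventually_predict_eq hc
    (eventually_predict_eq_of_mistakes_le fun n => hL _ (realizable_prefixSample f hf n))
end

section
/- Suppose there is a total computable function A that, on input a Littlestone tree T of depth d+1 (suitably encoded), outputs a leaf of T that is not H-realizable, where H has effective Littlestone dimension witnessed by A. Then the class Ĥ of all functions f : ℕ → {0,1} that 'agree with A' (i.e., for no depth-(d+1) Littlestone tree T is the path sample of the leaf A(T) consistent with f) contains H, has effective Littlestone dimension at most d, and is effectively closed as a subset of {0,1}^ℕ. -/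
/-! `A` picks in every tree a leaf whose cylinder misses `H`; the class `Ĥ` is the complement
of the union of all these cylinders. So `H ⊆ Ĥ`, `A` still picks non-realizable leaves for `Ĥ`,
and decoding tree codes enumerates the cylinders computably, which makes `Ĥ` effectively closed. -/

theorem primrec₂_nodeLabel : Primrec₂ nodeLabel :=
  (Primrec.option_getD.comp (Primrec.listLookup.comp Primrec.snd Primrec.fst)
    (Primrec.const 0)).of_eq fun _ => by unfold nodeLabel; congr!

theorem primrec₂_branchSample : Primrec₂ branchSample :=
  Primrec.list_map (Primrec.list_range.comp (Primrec.list_length.comp Primrec.snd)) <|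
    Primrec.pair
      (primrec₂_nodeLabel.comp (Primrec.fst.comp Primrec.fst)
        (Primrec.list_take.comp Primrec.snd (Primrec.snd.comp Primrec.fst)))
      ((Primrec.list_getD false).comp (Primrec.snd.comp Primrec.fst) Primrec.snd)

theorem EffOpen.iUnion_cyl {α : Type*} [Primcodable α] [Inhabited α] {g : α → Sample}
    (hg : Computable g) : EffOpen (⋃ a, Cyl (g a)) := by
  -- numbers that decode to nothing are sent to `default`, so every index names a member of the family
  refine ⟨fun n => g ((Encodable.decode n).getD default),
    hg.comp (Computable.option_getD Computable.decode (Computable.const default)), ?_⟩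
  apply subset_antisymm
  · exact Set.iUnion_subset fun a => Set.subset_iUnion_of_subset (Encodable.encode a)
      (by simp only [Encodable.encodek, Option.getD_some, subset_rfl])
  · exact Set.iUnion_subset fun n => Set.subset_iUnion (fun a => Cyl (g a)) _

theorem EffClosed.setOf_forall_not_consistent {α : Type*} [Primcodable α] [Inhabited α]
    {g : α → Sample} (hg : Computable g) : EffClosed {f | ∀ a, ¬ Consistent f (g a)} := by
  have hcompl : {f | ∀ a, ¬ Consistent f (g a)}ᶜ = ⋃ a, Cyl (g a) := by
    ext f
    simp [Cyl]
  exact (congrArg EffOpen hcompl).mpr (EffOpen.iUnion_cyl hg)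

theorem EldimLe.eldim_le {H : Set (ℕ → Bool)} {d : ℕ} (h : EldimLe H d) : Eldim H ≤ d :=
  sInf_le ⟨d, h, rfl⟩

theorem eldimLe_setOf_forall_not_consistent {d : ℕ} {A : TreeCode → List Bool}
    (hA : Computable A) (hlen : ∀ T, (A T).length = d + 1) :
    EldimLe {f | ∀ T : TreeCode, ¬ Consistent f (branchSample T (A T))} d :=
  ⟨A, hA, fun T => ⟨hlen T, fun ⟨_, hf, hc⟩ => hf T hc⟩⟩

theorem stmt8 (H : Set (ℕ → Bool)) (d : ℕ) (A : TreeCode → List Bool)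
    (hA : Computable A)
    (hAw : ∀ T : TreeCode, (A T).length = d + 1 ∧ ¬ Realizable H (branchSample T (A T))) :
    H ⊆ {f | ∀ T : TreeCode, ¬ Consistent f (branchSample T (A T))} ∧
      Eldim {f | ∀ T : TreeCode, ¬ Consistent f (branchSample T (A T))} ≤ (d : ℕ∞) ∧
      EffClosed {f | ∀ T : TreeCode, ¬ Consistent f (branchSample T (A T))} :=
  ⟨fun f hf T hc => (hAw T).2 ⟨f, hf, hc⟩,
    (eldimLe_setOf_forall_not_consistent hA fun T => (hAw T).1).eldim_le,
    EffClosed.setOf_forall_not_consistent (primrec₂_branchSample.to_comp.comp Computable.id hA)⟩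
end

section
/- For any hypothesis class H, ⌊log₂ tdim(H)⌋ ≤ ldim(H), where tdim is the threshold dimension and ldim the Littlestone dimension. Equivalently, if H realizes all t+1 thresholds on some sequence (x₁,…,x_{t+1}), then ldim(H) ≥ ⌊log₂(t+1)⌋. -/
/-- The `i`-th threshold on `xs` (zero-indexed: the first `i` points labeled `0`,
the remaining points labeled `1`). -/
def threshold (xs : List ℕ) (i : ℕ) : Sample :=
  (xs.take i).map (fun x => (x, false)) ++ (xs.drop i).map (fun x => (x, true))

/-!
With `2 ^ (d + 1)` thresholds on `xs` one builds a Littlestone tree of depth `d + 1` by binary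
search: each node is labelled by the point of `xs` that splits the thresholds still consistent
with the path to it into two halves. Each branch is then consistent with the threshold indexed by
the rank of its leaf, hence `H`-realizable, so `Ldim H > d`.
-/

lemma List.lookup_map_graph {α β : Type*} [BEq α] [LawfulBEq α] (g : α → β) {l : List α}
    {a : α} (ha : a ∈ l) : (l.map fun x => (x, g x)).lookup a = some (g a) := by
  induction l with
  | nil => simp at ha
  | cons x l ih =>
    by_cases hax : a = x
    · simp [hax]
    · simp [List.lookup_cons, beq_false_of_ne hax, ih (List.mem_of_ne_of_mem hax ha)]

lemma exists_treeCode_nodeLabel_eq (g : List Bool → ℕ) (d : ℕ) :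
    ∃ T : TreeCode, ∀ p : List Bool, p.length ≤ d → nodeLabel T p = g p := by
  refine ⟨(List.finite_length_le Bool d).toFinset.toList.map fun p => (p, g p), fun p hp => ?_⟩
  rw [nodeLabel, List.lookup_map_graph g (by simpa using hp)]
  rfl

lemma consistent_branchSample_iff (f : ℕ → Bool) (T : TreeCode) (p : List Bool) :
    Consistent f (branchSample T p) ↔
      ∀ i (hi : i < p.length), f (nodeLabel T (p.take i)) = p[i] := by
  simp only [Consistent, branchSample, List.forall_mem_map, List.mem_range]
  exact forall_congr' fun i =>
    ⟨fun h hi => by simpa [hi] using h hi, fun h hi => by simpa [hi] using h hi⟩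

lemma Consistent.apply_eq_of_threshold {f : ℕ → Bool} {xs : List ℕ} {j : ℕ}
    (hf : Consistent f (threshold xs j)) {k : ℕ} (hk : k < xs.length) :
    f xs[k] = decide (j ≤ k) := by
  by_cases hjk : j ≤ k
  · refine (hf _ (List.mem_append_right _ (List.mem_map.2 ⟨xs[k], ?_, rfl⟩))).trans ?_
    · exact List.mem_drop_iff_getElem.2 ⟨k - j, by omega, by congr 1; omega⟩
    · simp [hjk]
  · refine (hf _ (List.mem_append_left _ (List.mem_map.2 ⟨xs[k], ?_, rfl⟩))).trans ?_
    · exact List.mem_take_iff_getElem.2 ⟨k, by omega, rfl⟩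
    · simp [hjk]

/-- Rank of a leaf among the leaves of its depth, counted with `true`-edges first, since a
threshold with small index labels many points `1`. -/
def pathRank : List Bool → ℕ
  | [] => 0
  | b :: q => cond b 0 (2 ^ q.length) + pathRank q

lemma pathRank_lt (p : List Bool) : pathRank p < 2 ^ p.length := by
  induction p with
  | nil => simp [pathRank]
  | cons b p ih => cases b <;> simp [pathRank, pow_succ] <;> omega

lemma pathRank_append (p q : List Bool) :
    pathRank (p ++ q) = pathRank p * 2 ^ q.length + pathRank q := by
  induction p with
  | nil => simp [pathRank]
  | cons b p ih => cases b <;> simp [pathRank, ih, pow_add]; ring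

lemma pathRank_replicate_false (k : ℕ) : pathRank (List.replicate k false) = 2 ^ k - 1 := by
  induction k with
  | zero => rfl
  | succ k ih =>
    simp only [List.replicate_succ, pathRank, cond_false, List.length_replicate, ih, pow_succ]
    have := Nat.one_le_two_pow (n := k)
    omega

lemma pathRank_append_cons_le_iff (p r : List Bool) (b : Bool) :
    pathRank (p ++ b :: r) ≤ pathRank (p ++ true :: List.replicate r.length false) ↔
      b = true := by
  have := pathRank_lt r
  have := Nat.one_le_two_pow (n := r.length)
  cases b <;> simp [pathRank_append, pathRank, pathRank_replicate_false] <;> omega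

/-- Binary search: node `q` of a depth-`(d+1)` tree asks for the point whose index is the largest
rank of a leaf below the `true`-edge of `q`. -/
def nodeRank (d : ℕ) (q : List Bool) : ℕ :=
  pathRank (q ++ true :: List.replicate (d - q.length) false)

lemma pathRank_le_nodeRank_take_iff {d : ℕ} {p : List Bool} (hp : p.length = d + 1) {i : ℕ}
    (hi : i < p.length) : pathRank p ≤ nodeRank d (p.take i) ↔ p[i] = true := by
  have hrest : d - (p.take i).length = (p.drop (i + 1)).length := by simp; omega
  have h := pathRank_append_cons_le_iff (p.take i) (p.drop (i + 1)) p[i]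
  rwa [← List.drop_eq_getElem_cons hi, List.take_append_drop, ← hrest] at h

lemma nodeRank_lt {d : ℕ} {q : List Bool} (hq : q.length ≤ d) : nodeRank d q < 2 ^ (d + 1) := by
  have := pathRank_lt (q ++ true :: List.replicate (d - q.length) false)
  rwa [List.length_append, List.length_cons, List.length_replicate,
    show q.length + (d - q.length + 1) = d + 1 by omega] at this

lemma not_ldimLe_of_realizable_threshold {H : Set (ℕ → Bool)} {xs : List ℕ} {d : ℕ}
    (hre : ∀ i < xs.length, Realizable H (threshold xs i)) (hd : 2 ^ (d + 1) ≤ xs.length) :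
    ¬ LdimLe H d := by
  intro hLd
  obtain ⟨T, hT⟩ := exists_treeCode_nodeLabel_eq (fun q => xs.getD (nodeRank d q) 0) d
  obtain ⟨p, hp, hnr⟩ := hLd T
  have hpxs : pathRank p < xs.length := (hp ▸ pathRank_lt p).trans_le hd
  obtain ⟨f, hfH, hf⟩ := hre (pathRank p) hpxs
  refine hnr ⟨f, hfH, (consistent_branchSample_iff f T p).2 fun i hi => ?_⟩
  have hqd : (p.take i).length ≤ d := by simp; omega
  have hnode : nodeRank d (p.take i) < xs.length := (nodeRank_lt hqd).trans_le hd
  rw [hT _ hqd, List.getD_eq_getElem _ _ hnode, hf.apply_eq_of_threshold hnode, Bool.eq_iff_iff,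
    decide_eq_true_iff]
  exact pathRank_le_nodeRank_take_iff hp hi

theorem stmt10 (H : Set (ℕ → Bool)) (t : ℕ) (xs : List ℕ) (hlen : xs.length = t + 1)
    (hre : ∀ i < t + 1, Realizable H (threshold xs i)) :
    (Nat.log 2 (t + 1) : ℕ∞) ≤ Ldim H := by
  refine le_sInf ?_
  rintro _ ⟨d, hd, rfl⟩
  rw [← hlen] at hre
  have hlt : xs.length < 2 ^ (d + 1) :=
    not_le.1 fun h => not_ldimLe_of_realizable_threshold hre h hd
  exact_mod_cast Nat.lt_succ_iff.1 (Nat.log_lt_of_lt_pow (by omega) (hlen ▸ hlt))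
end

section
/- Let H be a hypothesis class with finite effective Littlestone dimension d, witnessed by a total computable function A on depth-(d+1) Littlestone trees. Suppose f ∈ H, the sample S is consistent with f and with no other function of H, and H is effectively closed. Then f is computable. -/
theorem isClopen_cyl (T : Sample) : IsClopen (Cyl T) := by
  induction T with
  | nil => simpa [Cyl, Consistent] using isClopen_univ
  | cons p T ih =>
    have hp : IsClopen {h : ℕ → Bool | h p.1 = p.2} :=
      (isClopen_discrete {p.2}).preimage (continuous_apply p.1)
    convert hp.inter ih using 1
    ext h
    simp [Cyl, Consistent]

theorem consistent_congr {h h' : ℕ → Bool} {T : Sample} (hh : ∀ p ∈ T, h p.1 = h' p.1) :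
    Consistent h T ↔ Consistent h' T :=
  forall₂_congr fun p hp => by rw [hh p hp]

theorem IsCompact.exists_subset_biUnion_lt {X : Type*} [TopologicalSpace X] {K : Set X}
    (hK : IsCompact K) {U : ℕ → Set X} (hU : ∀ n, IsOpen (U n)) (hKU : K ⊆ ⋃ n, U n) :
    ∃ N, K ⊆ ⋃ n < N, U n := by
  obtain ⟨t, ht⟩ := hK.elim_finite_subcover U hU hKU
  obtain ⟨N, hN⟩ := t.exists_nat_subset_range
  exact ⟨N, ht.trans <| Set.biUnion_mono (fun n hn => Finset.mem_range.1 (hN hn)) fun _ _ => le_rfl⟩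

def bitStrings : ℕ → List (List Bool)
  | 0 => [[]]
  | k + 1 => (bitStrings k).flatMap fun σ => [σ ++ [false], σ ++ [true]]

theorem map_range_mem_bitStrings (h : ℕ → Bool) (k : ℕ) : (List.range k).map h ∈ bitStrings k := by
  induction k with
  | zero => simp [bitStrings]
  | succ k ih =>
    simp only [bitStrings, List.mem_flatMap]
    exact ⟨_, ih, by cases h k <;> simp [List.range_succ]⟩

def coordBound (T : Sample) : ℕ := T.foldr (fun p k => max (p.1 + 1) k) 0

theorem lt_coordBound {T : Sample} {p : ℕ × Bool} (hp : p ∈ T) : p.1 < coordBound T := by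
  induction T with
  | nil => simp at hp
  | cons q T ih =>
    simp only [coordBound, List.foldr_cons] at ih ⊢
    rcases List.mem_cons.1 hp with rfl | hp
    · omega
    · exact lt_max_of_lt_right (ih hp)

/-- `Cyl T ⊆ ⋃ U ∈ L, Cyl U`, tested on the finitely many points of Cantor space that are
`false` beyond all coordinates mentioned in `T` and `L`. -/
def CoveredBy (T : Sample) (L : List Sample) : Prop :=
  ∀ σ ∈ bitStrings (coordBound (T ++ L.flatten)),
    Consistent (σ.getD · false) T → ∃ U ∈ L, Consistent (σ.getD · false) U

theorem coveredBy_iff {T : Sample} {L : List Sample} :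
    CoveredBy T L ↔ Cyl T ⊆ ⋃ U ∈ L, Cyl U := by
  constructor
  · intro hcov h hT
    set k := coordBound (T ++ L.flatten)
    have hσ : ∀ p ∈ T ++ L.flatten, ((List.range k).map h).getD p.1 false = h p.1 := fun p hp => by
      have hpk : p.1 < k := lt_coordBound hp
      simp [List.getD_eq_getElem?_getD, hpk]
    obtain ⟨U, hU, hσU⟩ := hcov _ (map_range_mem_bitStrings h k) <|
      (consistent_congr fun p hp => hσ p (List.mem_append_left _ hp)).2 hT
    refine Set.mem_biUnion hU ((consistent_congr fun p hp => hσ p ?_).1 hσU)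
    exact List.mem_append_right _ (List.mem_flatten_of_mem hU hp)
  · intro hsub σ _ hT
    simpa [Set.mem_iUnion, Cyl] using hsub (show (σ.getD · false) ∈ Cyl T from hT)

section Primrec

open Primrec

theorem primrec_bitStrings : Primrec bitStrings := by
  have step : Primrec₂ fun (_ : ℕ) (l : List (List Bool)) =>
      l.flatMap fun σ => [σ ++ [false], σ ++ [true]] :=
    (list_flatMap snd <| (list_cons.comp (list_concat.comp snd (const false)) <|
      list_cons.comp (list_concat.comp snd (const true)) (const [])).to₂).to₂
  refine (nat_rec₁ [[]] step).of_eq fun k => ?_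
  induction k with
  | zero => rfl
  | succ k ih => simp only [bitStrings, ← ih]

theorem primrec_coordBound : Primrec coordBound :=
  (list_foldr Primrec.id (const 0) <|
    (nat_max.comp (succ.comp (fst.comp (fst.comp snd))) (snd.comp snd)).to₂).of_eq fun _ => rfl

theorem primrecRel_consistent_getD :
    PrimrecRel fun (σ : List Bool) (U : Sample) => Consistent (σ.getD · false) U := by
  have h : PrimrecRel fun (p : ℕ × Bool) (σ : List Bool) => σ.getD p.1 false = p.2 :=
    Primrec.eq.comp ((list_getD false).comp snd (fst.comp fst)) (snd.comp fst)
  exact h.forall_mem_list.swap.of_eq fun _ _ => Iff.rfl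

theorem primrecRel_coveredBy : PrimrecRel CoveredBy := by
  have hK : Primrec fun x : Sample × List Sample => bitStrings (coordBound (x.1 ++ x.2.flatten)) :=
    primrec_bitStrings.comp <| primrec_coordBound.comp <|
      list_append.comp fst (list_flatten.comp snd)
  have hU : PrimrecRel fun (σ : List Bool) (x : Sample × List Sample) =>
      ∃ U ∈ x.2, Consistent (σ.getD · false) U :=
    primrecRel_consistent_getD.swap.exists_mem_list.swap.comp₂ Primrec₂.left
      (snd.comp₂ Primrec₂.right)
  have hσ : PrimrecRel fun (σ : List Bool) (x : Sample × List Sample) =>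
      ¬ Consistent (σ.getD · false) x.1 ∨ ∃ U ∈ x.2, Consistent (σ.getD · false) U :=
    (primrecRel_consistent_getD.comp₂ Primrec₂.left (fst.comp₂ Primrec₂.right)).not.or hU
  refine (hσ.forall_mem_list.comp hK Primrec.id).primrecRel.of_eq fun T L => ?_
  simp only [CoveredBy, imp_iff_not_or, id]

end Primrec

theorem REPred.comp {α β : Type*} [Primcodable α] [Primcodable β] {p : β → Prop} {f : α → β}
    (hp : REPred p) (hf : Computable f) : REPred fun a => p (f a) :=
  Partrec.comp hp hf

theorem REPred.exists_nat {α : Type*} [Primcodable α] {q : α × ℕ → Prop}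
    (hq : ComputablePred q) : REPred fun a => ∃ n, q (a, n) := by
  obtain ⟨_, hq⟩ := hq
  have hsearch : Partrec fun a => Nat.rfind fun n => Part.some (decide (q (a, n))) :=
    Partrec.rfind hq.partrec
  exact hsearch.dom_re.of_eq fun a => Nat.rfind_dom.trans (by simp)

theorem Computable.of_forall_rePred_eq {α : Type*} [Primcodable α] {f : α → Bool}
    (hf : ∀ b, REPred fun a => f a = b) : Computable f := by
  obtain ⟨_, hdec⟩ := ComputablePred.computable_iff_re_compl_re'.2
    ⟨hf true, (hf false).of_eq fun a => by simp⟩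
  exact hdec.of_eq fun a => by simp

theorem computable_map_range {σ : Type*} [Primcodable σ] {g : ℕ → σ} (hg : Computable g) :
    Computable fun N => (List.range N).map g := by
  have step : Computable₂ fun (_ : ℕ) (x : ℕ × List σ) => x.2 ++ [g x.1] :=
    (Computable.list_concat.comp (Computable.snd.comp Computable.snd)
      (hg.comp (Computable.fst.comp Computable.snd))).to₂
  refine (Computable.nat_rec Computable.id (Computable.const []) step).of_eq fun N => ?_
  induction N with
  | zero => rfl
  | succ N ih => simp [List.range_succ, ← ih]

theorem rePred_cyl_subset {X : Set (ℕ → Bool)} (hX : EffOpen X) :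
    REPred fun T => Cyl T ⊆ X := by
  obtain ⟨g, hg, rfl⟩ := hX
  have hcov : ComputablePred fun x : Sample × ℕ => CoveredBy x.1 ((List.range x.2).map g) := by
    classical
    exact Computable.computablePred <| primrecRel_coveredBy.decide.to_comp.comp
      Computable.fst ((computable_map_range hg).comp Computable.snd)
  refine (REPred.exists_nat hcov).of_eq fun T => ?_
  simp only [coveredBy_iff, List.mem_map, List.mem_range, Set.iUnion_exists, Set.biUnion_and',
    Set.iUnion_iUnion_eq_right]
  refine ⟨fun ⟨N, hN⟩ => hN.trans <| Set.iUnion₂_subset fun n _ =>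
    Set.subset_iUnion (fun n => Cyl (g n)) n, fun h => ?_⟩
  exact (isClopen_cyl T).isClosed.isCompact.exists_subset_biUnion_lt
    (fun n => (isClopen_cyl (g n)).isOpen) h

theorem rePred_not_realizable {H : Set (ℕ → Bool)} (hH : EffClosed H) :
    REPred fun T => ¬ Realizable H T :=
  (rePred_cyl_subset hH).of_eq fun T => by
    simpa [Realizable, Set.subset_def, Cyl] using forall_congr' fun _ => imp_not_comm

theorem realizable_append_singleton_iff {H : Set (ℕ → Bool)} {f : ℕ → Bool} (hf : f ∈ H)
    {S : Sample} (hS : Consistent f S) (huniq : ∀ g ∈ H, Consistent g S → g = f)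
    (x : ℕ) (b : Bool) :
    Realizable H (S ++ [(x, b)]) ↔ f x = b := by
  have hcons : ∀ g, Consistent g (S ++ [(x, b)]) ↔ Consistent g S ∧ g x = b := fun g => by
    simp [Consistent, or_imp, forall_and]
  constructor
  · rintro ⟨g, hg, hgS⟩
    obtain ⟨hgS, hgx⟩ := (hcons g).1 hgS
    exact huniq g hg hgS ▸ hgx
  · exact fun hfx => ⟨f, hf, (hcons f).2 ⟨hS, hfx⟩⟩

theorem stmt13_general (H : Set (ℕ → Bool))
    (f : ℕ → Bool) (hf : f ∈ H) (S : Sample) (hS : Consistent f S)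
    (huniq : ∀ g ∈ H, Consistent g S → g = f)
    (hcl : EffClosed H) : Computable f := by
  refine Computable.of_forall_rePred_eq fun b => ?_
  have hquery : Computable fun x => S ++ [(x, !b)] :=
    Computable.list_concat.comp (Computable.const S) (Computable.id.pair (Computable.const !b))
  refine ((rePred_not_realizable hcl).comp hquery).of_eq fun x => ?_
  rw [realizable_append_singleton_iff hf hS huniq]
  cases b <;> simp

theorem stmt13 (H : Set (ℕ → Bool)) (d : ℕ) (A : TreeCode → List Bool)
    (hA : Computable A)
    (hAw : ∀ T : TreeCode, (A T).length = d + 1 ∧ ¬ Realizable H (branchSample T (A T)))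
    (f : ℕ → Bool) (hf : f ∈ H) (S : Sample) (hS : Consistent f S)
    (huniq : ∀ g ∈ H, Consistent g S → g = f)
    (hcl : EffClosed H) : Computable f :=
  stmt13_general H f hf S hS huniq hcl
end

section
/- Let H be an infinite, effectively closed hypothesis class of Littlestone dimension 1 such that for every x ∈ ℕ not both H⁰ₓ and H¹ₓ have Littlestone dimension 0; define f : ℕ → {0,1} by choosing f(x) with ldim(H^x_{f(x)}) = 1. Then f ∈ H. -/
/-!
If both `H⁰ₓ` and `H¹ₓ` had positive Littlestone dimension, hanging a shattered point of each
below the root `x` would give a shattered tree of depth 2; so, as `ldim H = 1`, the class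
`H^x_{1 - f(x)}` has dimension 0 and hence at most one element. If `f ∉ H`, closedness of `H`
gives a finite sample `S` consistent with `f` that no `g ∈ H` satisfies, so every `g ∈ H` lies
in one of the finitely many classes `H^x_{1 - f(x)}`, `x ∈ S`, and `H` would be finite.
-/
lemma ldimLe_of_ldim_eq {H : Set (ℕ → Bool)} {n : ℕ} (h : Ldim H = n) : LdimLe H n := by
  have hne : ((↑) '' {d : ℕ | LdimLe H d} : Set ℕ∞).Nonempty := by
    by_contra hemp
    rw [Set.not_nonempty_iff_eq_empty] at hemp
    rw [Ldim, hemp, sInf_empty] at h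
    exact ENat.top_ne_natCast n h
  obtain ⟨d, hd, hdH⟩ := csInf_mem hne
  rw [← Ldim, h, Nat.cast_inj] at hdH
  exact hdH ▸ hd

lemma not_ldimLe_of_lt_ldim {H : Set (ℕ → Bool)} {d : ℕ} (h : (d : ℕ∞) < Ldim H) :
    ¬ LdimLe H d :=
  fun hle => (sInf_le ⟨d, hle, rfl⟩ : Ldim H ≤ d).not_gt h

lemma consistent_pair_iff {g : ℕ → Bool} {a b : ℕ} {c d : Bool} :
    Consistent g [(a, c), (b, d)] ↔ g a = c ∧ g b = d := by
  simp [Consistent]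

lemma not_ldimLe_zero_iff {C : Set (ℕ → Bool)} :
    ¬ LdimLe C 0 ↔ ∃ z, ∀ c, ∃ g ∈ C, g z = c := by
  have hsingle : ∀ (T : TreeCode) c, branchSample T [c] = [(nodeLabel T [], c)] := fun _ _ => rfl
  simp only [LdimLe, not_forall, not_exists, not_and, not_not]
  constructor
  · rintro ⟨T, hT⟩
    refine ⟨nodeLabel T [], fun c => ?_⟩
    obtain ⟨g, hg, hcons⟩ := hsingle T c ▸ hT [c] rfl
    exact ⟨g, hg, hcons _ (List.mem_singleton_self _)⟩
  · rintro ⟨z, hz⟩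
    refine ⟨[([], z)], fun p hp => ?_⟩
    obtain ⟨c, rfl⟩ := List.length_eq_one_iff.mp hp
    obtain ⟨g, hg, hgz⟩ := hz c
    exact hsingle _ c ▸ ⟨g, hg, by simpa [Consistent, nodeLabel] using hgz⟩

lemma subsingleton_of_ldimLe_zero {C : Set (ℕ → Bool)} (h : LdimLe C 0) : C.Subsingleton := by
  intro g₀ hg₀ g₁ hg₁
  by_contra hne
  obtain ⟨y, hy⟩ := Function.ne_iff.mp hne
  refine not_ldimLe_zero_iff.mpr ⟨y, fun c => ?_⟩ h
  by_cases hc : g₀ y = c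
  · exact ⟨g₀, hg₀, hc⟩
  · exact ⟨g₁, hg₁, by cases c <;> cases h₀ : g₀ y <;> simp_all⟩

lemma not_ldimLe_one_of_forall_not_ldimLe_zero {H : Set (ℕ → Bool)} {x : ℕ}
    (h : ∀ b, ¬ LdimLe {g ∈ H | g x = b} 0) : ¬ LdimLe H 1 := by
  choose z hz using fun b => not_ldimLe_zero_iff.mp (h b)
  intro hH
  obtain ⟨p, hp, hnr⟩ := hH [([], x), ([false], z false), ([true], z true)]
  obtain ⟨b, c, rfl⟩ := List.length_eq_two.mp hp
  have hsample : branchSample [([], x), ([false], z false), ([true], z true)] [b, c] =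
      [(x, b), (z b, c)] := by
    cases b <;> rfl
  obtain ⟨g, ⟨hg, hgx⟩, hgz⟩ := hz b c
  exact hnr (hsample ▸ ⟨g, hg, consistent_pair_iff.mpr ⟨hgx, hgz⟩⟩)

lemma subsingleton_of_ldimLe_one_of_not_ldimLe_zero {H : Set (ℕ → Bool)} (hH : LdimLe H 1)
    {x : ℕ} {b : Bool} (hb : ¬ LdimLe {g ∈ H | g x = b} 0) :
    {g ∈ H | g x = !b}.Subsingleton := by
  refine subsingleton_of_ldimLe_zero ?_
  by_contra hnb
  refine not_ldimLe_one_of_forall_not_ldimLe_zero (x := x) (fun c => ?_) hH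
  cases b <;> cases c <;> assumption

lemma EffClosed.exists_consistent_not_realizable {H : Set (ℕ → Bool)} (hH : EffClosed H)
    {f : ℕ → Bool} (hf : f ∉ H) : ∃ S, Consistent f S ∧ ¬ Realizable H S := by
  obtain ⟨S, -, hHc⟩ := hH
  obtain ⟨n, hfn⟩ := Set.mem_iUnion.mp (hHc ▸ Set.mem_compl hf)
  refine ⟨S n, hfn, fun ⟨g, hg, hgn⟩ => ?_⟩
  exact (hHc ▸ Set.mem_iUnion.mpr ⟨n, hgn⟩ : g ∈ Hᶜ) hg

lemma subset_biUnion_of_not_realizable {H : Set (ℕ → Bool)} {f : ℕ → Bool} {S : Sample}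
    (hfS : Consistent f S) (hS : ¬ Realizable H S) :
    H ⊆ ⋃ p ∈ S.toFinset, {g ∈ H | g p.1 = !(f p.1)} := by
  intro g hg
  obtain ⟨p, hpS, hgp⟩ : ∃ p ∈ S, g p.1 ≠ p.2 := by
    by_contra! hcons
    exact hS ⟨g, hg, hcons⟩
  exact Set.mem_biUnion (List.mem_toFinset.mpr hpS) ⟨hg, Bool.eq_not_iff.mpr (hfS p hpS ▸ hgp)⟩

theorem stmt16_general (H : Set (ℕ → Bool)) (hinf : H.Infinite) (hcl : EffClosed H)
    (hld : Ldim H = 1)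
    (f : ℕ → Bool)
    (hf : ∀ x : ℕ, Ldim {g ∈ H | g x = f x} = 1) : f ∈ H := by
  by_contra hfH
  obtain ⟨S, hfS, hS⟩ := hcl.exists_consistent_not_realizable hfH
  have hsub : ∀ x, {g ∈ H | g x = !(f x)}.Subsingleton := fun x =>
    subsingleton_of_ldimLe_one_of_not_ldimLe_zero
      (ldimLe_of_ldim_eq (n := 1) (by simpa using hld)) (not_ldimLe_of_lt_ldim (by simp [hf x]))
  exact hinf <| (S.toFinset.finite_toSet.biUnion fun p _ => (hsub p.1).finite).subset
    (subset_biUnion_of_not_realizable hfS hS)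

theorem stmt16 (H : Set (ℕ → Bool)) (hinf : H.Infinite) (hcl : EffClosed H)
    (hld : Ldim H = 1)
    (hnb : ∀ x : ℕ, ¬ (Ldim {g ∈ H | g x = false} = 0 ∧ Ldim {g ∈ H | g x = true} = 0))
    (f : ℕ → Bool)
    (hf : ∀ x : ℕ, Ldim {g ∈ H | g x = f x} = 1) : f ∈ H :=
  stmt16_general H hinf hcl hld f hf
end

section
/- There exists a hypothesis class H of effective Littlestone dimension 2 such that for every d ∈ ℕ, no partial computable online learner learns H with at most d mistakes. -/
/-- Number of sequential prediction mistakes of a partial learner on `S`: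
indices where the true label is not the (defined) output of the learner. -/
noncomputable def pmistakes (L : Sample × ℕ →. Bool) (S : Sample) : ℕ :=
  {i | i < S.length ∧ (S.getD i (0, false)).2 ∉ L (S.take i, (S.getD i (0, false)).1)}.ncard


/-!
The class consists of four gadget functions, which shatter a tree of depth two, and of one
diagonal function `diagFun cd` for every code `cd`, supported on its own column of points indexed
by histories. A history records, stage by stage, the label on which the learner computed by `cd`
errs and its exact running time. If that learner is defined on all realizable samples, there are
valid histories (those recording its true behaviour) of every length, and along one of length
`d + 1` it makes `d + 1` mistakes on a sample realized by `diagFun cd`.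

The running times make validity decidable and force the valid histories of `cd` into a chain. A
root labelled `1` leaves at most two gadgets, or the single diagonal function of its column, which
is then known below any valid history. A short case analysis then computably finds, in every tree
of depth three, a branch that no function of the class follows.
-/

namespace Diagonal

open Nat.Partrec (Code)
open Nat.Partrec.Code Encodable

theorem prefix_of_concat_prefix_concat {α : Type*} {l₁ l₂ : List α} {a b : α}
    (h : l₁ ++ [a] <+: l₂ ++ [b]) : l₁ <+: l₂ := by
  rcases List.prefix_concat_iff.1 h with heq | hp
  · exact (List.append_inj' heq rfl).1 ▸ List.prefix_rfl
  · exact (List.prefix_append _ _).trans hp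

theorem concat_getElem_prefix {α : Type*} {l l' : List α} (hp : l <+: l')
    (hlt : l.length < l'.length) : l ++ [l'[l.length]] <+: l' := by
  have := List.take_prefix (l.length + 1) l'
  rwa [List.take_succ_eq_append_getElem hlt, ← List.prefix_iff_eq_take.1 hp] at this

theorem eldim_eq_of_eldimLe {H : Set (ℕ → Bool)} {d : ℕ} (hd : EldimLe H d)
    (hlt : ∀ k < d, ¬ EldimLe H k) : Eldim H = d :=
  le_antisymm (sInf_le ⟨d, hd, rfl⟩) <| le_sInf <| by
    rintro _ ⟨k, hk, rfl⟩
    exact_mod_cast not_lt.1 fun h => hlt k h hk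

/-! ### Running times of codes -/

def HaltsAt (cd : Code) (n t m : ℕ) : Prop :=
  evaln t cd n = some m ∧ evaln (t - 1) cd n = none

instance (cd : Code) (n t m : ℕ) : Decidable (HaltsAt cd n t m) := by
  unfold HaltsAt; infer_instance

theorem HaltsAt.unique {cd : Code} {n t t' m m' : ℕ} (h : HaltsAt cd n t m)
    (h' : HaltsAt cd n t' m') : t = t' ∧ m = m' := by
  have le {s s' k k'} (hs : HaltsAt cd n s k) (hs' : HaltsAt cd n s' k') : s ≤ s' := by
    by_contra hlt
    simpa [hs.2] using evaln_mono (Nat.le_sub_one_of_lt (not_le.1 hlt)) hs'.1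
  obtain rfl := le_antisymm (le h h') (le h' h)
  exact ⟨rfl, Option.some.inj (h.1.symm.trans h'.1)⟩

theorem exists_haltsAt {cd : Code} {n m : ℕ} (hm : m ∈ cd.eval n) : ∃ t, HaltsAt cd n t m := by
  classical
  have hex : ∃ k, m ∈ evaln k cd n := evaln_complete.1 hm
  refine ⟨Nat.find hex, Nat.find_spec hex, Option.eq_none_iff_forall_not_mem.2 fun m' hm' => ?_⟩
  have hpos : Nat.find hex ≠ 0 := fun h0 => by simpa [h0, evaln] using Nat.find_spec hex
  obtain rfl : m' = m := Part.mem_unique (evaln_sound hm') hm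
  exact Nat.find_min hex (Nat.sub_one_lt hpos) hm'

def Computes {α β : Type*} [Primcodable α] [Primcodable β] (cd : Code) (f : α →. β) : Prop :=
  ∀ a, cd.eval (encode a) = (f a).map encode

theorem exists_computes {α β : Type*} [Primcodable α] [Primcodable β] {f : α →. β}
    (hf : Partrec f) : ∃ cd : Code, Computes cd f := by
  obtain ⟨cd, hcd⟩ := exists_code.1 hf
  exact ⟨cd, fun a => by simp [hcd, encodek]⟩

instance : DecidableEq Code := decidableEqOfEncodable Code

/-! ### Points, histories and stages -/

/-- Entry `(y, t)` of a history: at that stage the learner runs for exactly `t` steps and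
predicts `!y`. -/
abbrev Hist := List (Bool × ℕ)

abbrev Point := List Bool ⊕ Code × Hist

def gadgetPoint (q : List Bool) : ℕ := encode (Sum.inl q : Point)

def diagPoint (cd : Code) (h : Hist) : ℕ := encode (Sum.inr (cd, h) : Point)

def diagPoint? (x : ℕ) : Option (Code × Hist) := (decode₂ Point x).bind Sum.getRight?

theorem gadgetPoint_inj {q q' : List Bool} : gadgetPoint q = gadgetPoint q' ↔ q = q' := by
  rw [gadgetPoint, gadgetPoint, encode_inj, Sum.inl.injEq]

theorem diagPoint_inj {cd cd' : Code} {h h' : Hist} :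
    diagPoint cd h = diagPoint cd' h' ↔ cd = cd' ∧ h = h' := by
  simp [diagPoint, encode_inj]

theorem diagPoint?_eq_some {x : ℕ} {p : Code × Hist} :
    diagPoint? x = some p ↔ x = diagPoint p.1 p.2 := by
  rw [diagPoint?, Option.bind_eq_some_iff]
  constructor
  · rintro ⟨a, ha, hr⟩
    rw [Sum.getRight?_eq_some_iff] at hr
    exact (mem_decode₂.1 (hr ▸ ha)).symm
  · rintro rfl
    exact ⟨_, encodek₂ _, rfl⟩

theorem diagPoint?_diagPoint (cd : Code) (h : Hist) : diagPoint? (diagPoint cd h) = some (cd, h) :=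
  diagPoint?_eq_some.2 rfl

theorem diagPoint?_gadgetPoint (q : List Bool) : diagPoint? (gadgetPoint q) = none := by
  rw [diagPoint?, gadgetPoint, encodek₂]; rfl

def stageSample (cd : Code) (h : Hist) : Sample :=
  (List.range h.length).map fun j => (diagPoint cd (h.take j), (h.getD j (false, 0)).1)

def Stage (cd : Code) (h : Hist) (e : Bool × ℕ) : Prop :=
  HaltsAt cd (encode (stageSample cd h, diagPoint cd h)) e.2 (encode (!e.1))

instance (cd : Code) (h : Hist) (e : Bool × ℕ) : Decidable (Stage cd h e) := by
  unfold Stage; infer_instance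

theorem Stage.unique {cd : Code} {h : Hist} {e e' : Bool × ℕ} (he : Stage cd h e)
    (he' : Stage cd h e') : e = e' := by
  obtain ⟨ht, hy⟩ := HaltsAt.unique he he'
  exact Prod.ext (by simpa using encode_injective hy) ht

def Valid (cd : Code) (h : Hist) : Prop :=
  ∀ h' e, h' ++ [e] <+: h → Stage cd h' e

section Valid

variable {cd : Code}

theorem Valid.of_prefix {h h' : Hist} (hv : Valid cd h) (hp : h' <+: h) : Valid cd h' :=
  fun _ _ he => hv _ _ (he.trans hp)

theorem valid_nil : Valid cd [] :=
  fun _ _ he => by simpa using he.length_le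

theorem valid_concat {h : Hist} {e : Bool × ℕ} :
    Valid cd (h ++ [e]) ↔ Valid cd h ∧ Stage cd h e := by
  refine ⟨fun hv => ⟨hv.of_prefix (List.prefix_append _ _), hv _ _ List.prefix_rfl⟩,
    fun ⟨hv, he⟩ h' e' hp => ?_⟩
  rcases List.prefix_concat_iff.1 hp with heq | hp
  · obtain ⟨rfl, rfl⟩ : h' = h ∧ e' = e := by simpa using heq
    exact he
  · exact hv _ _ hp

theorem Valid.prefix_or_prefix {h₁ h₂ : Hist} (hv₁ : Valid cd h₁) (hv₂ : Valid cd h₂) :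
    h₁ <+: h₂ ∨ h₂ <+: h₁ := by
  induction h₁ using List.reverseRecOn with
  | nil => exact Or.inl List.nil_prefix
  | append_singleton h e ih =>
    obtain ⟨hv, he⟩ := valid_concat.1 hv₁
    rcases ih hv with ⟨_ | ⟨e', t⟩, rfl⟩ | hp
    · exact Or.inr (by simp)
    · obtain rfl := he.unique (hv₂ h e' (by simp))
      exact Or.inl (by simp)
    · exact Or.inr (hp.trans (List.prefix_append _ _))

theorem valid_iff_forall_lt {h : Hist} :
    Valid cd h ↔ ∀ j < h.length, Stage cd (h.take j) (h.getD j (false, 0)) := by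
  refine ⟨fun hv j hj => hv _ _ ?_, fun hv h' e hp => ?_⟩
  · rw [List.getD_eq_getElem _ _ hj, ← List.take_succ_eq_append_getElem hj]
    exact List.take_prefix _ _
  · have hlt : h'.length < h.length := by simpa using hp.length_le
    have htake : h' ++ [e] = h.take h'.length ++ [h[h'.length]] := by
      rw [← List.take_succ_eq_append_getElem hlt, List.prefix_iff_eq_take.1 hp]; simp
    obtain ⟨hh', he⟩ := List.append_inj' htake rfl
    have := hv _ hlt
    rwa [← hh', List.getD_eq_getElem _ _ hlt, ← List.singleton_inj.1 he] at this

instance : DecidablePred (Valid cd) :=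
  fun _ => decidable_of_iff' _ valid_iff_forall_lt

end Valid

/-! ### The class -/

open Classical in
noncomputable def diagFun (cd : Code) (x : ℕ) : Bool :=
  decide (∃ h t, x = diagPoint cd h ∧ Valid cd (h ++ [(true, t)]))

def gadget (b₀ b₁ : Bool) (x : ℕ) : Bool :=
  (x == gadgetPoint [] && b₀) || (x == gadgetPoint [b₀] && b₁)

def diagClass : Set (ℕ → Bool) :=
  Set.range (fun b : Bool × Bool => gadget b.1 b.2) ∪ Set.range diagFun

section DiagFun

variable {cd : Code}

theorem diagFun_eq_true_iff {x : ℕ} :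
    diagFun cd x = true ↔ ∃ h t, x = diagPoint cd h ∧ Valid cd (h ++ [(true, t)]) := by
  simp [diagFun]

theorem diagFun_diagPoint_eq_true_iff {h : Hist} :
    diagFun cd (diagPoint cd h) = true ↔ ∃ t, Valid cd (h ++ [(true, t)]) := by
  simp [diagFun_eq_true_iff, diagPoint_inj]

theorem diagFun_diagPoint_of_prefix {h h' : Hist} {e : Bool × ℕ} (hv : Valid cd h')
    (hp : h ++ [e] <+: h') : diagFun cd (diagPoint cd h) = e.1 := by
  obtain ⟨y, t⟩ := e
  have hve : Valid cd (h ++ [(y, t)]) := hv.of_prefix hp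
  cases y with
  | true => exact diagFun_diagPoint_eq_true_iff.2 ⟨t, hve⟩
  | false =>
    refine Bool.eq_false_iff.2 fun hdiag => ?_
    obtain ⟨t', hvt⟩ := diagFun_diagPoint_eq_true_iff.1 hdiag
    simpa using (valid_concat.1 hvt).2.unique (valid_concat.1 hve).2

theorem diagFun_eq_false_of_forall_ne {x : ℕ} (hx : ∀ h, diagPoint? x ≠ some (cd, h)) :
    diagFun cd x = false :=
  Bool.eq_false_iff.2 fun hdiag => by
    obtain ⟨h, t, rfl, -⟩ := diagFun_eq_true_iff.1 hdiag
    exact hx h (diagPoint?_diagPoint cd h)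

end DiagFun

theorem gadget_eq_true_iff {b₀ b₁ : Bool} {x : ℕ} :
    gadget b₀ b₁ x = true ↔
      (x = gadgetPoint [] ∧ b₀ = true) ∨ (x = gadgetPoint [b₀] ∧ b₁ = true) := by
  simp [gadget]

/-! ### No partial computable learner makes boundedly many mistakes -/

theorem length_stageSample (cd : Code) (h : Hist) : (stageSample cd h).length = h.length := by
  simp [stageSample]

theorem stageSample_take (cd : Code) (h : Hist) (i : ℕ) :
    (stageSample cd h).take i = stageSample cd (h.take i) := by
  rw [stageSample, stageSample, ← List.map_take, List.take_range, List.length_take, min_comm]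
  refine List.map_congr_left fun j hj => ?_
  have hji : j < i := lt_of_lt_of_le (List.mem_range.1 hj) (min_le_right _ _)
  simp [List.take_take, min_eq_left hji.le, List.getD_eq_getElem?_getD, hji]

theorem stageSample_getD (cd : Code) {h : Hist} {i : ℕ} (hi : i < h.length) :
    (stageSample cd h).getD i (0, false) = (diagPoint cd (h.take i), (h.getD i (false, 0)).1) := by
  simp [stageSample, List.getD_eq_getElem?_getD, hi]

theorem realizable_stageSample {cd : Code} {h : Hist} (hv : Valid cd h) :
    Realizable diagClass (stageSample cd h) := by
  refine ⟨diagFun cd, Or.inr ⟨cd, rfl⟩, fun p hp => ?_⟩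
  obtain ⟨j, hj, rfl⟩ := List.mem_map.1 hp
  have hj : j < h.length := List.mem_range.1 hj
  rw [List.getD_eq_getElem _ _ hj]
  refine diagFun_diagPoint_of_prefix hv ?_
  rw [← List.take_succ_eq_append_getElem hj]
  exact List.take_prefix _ _

theorem pmistakes_eq_length {L : Sample × ℕ →. Bool} {S : Sample}
    (hS : ∀ i < S.length, (S.getD i (0, false)).2 ∉ L (S.take i, (S.getD i (0, false)).1)) :
    pmistakes L S = S.length := by
  have hset : {i | i < S.length ∧ (S.getD i (0, false)).2 ∉ L (S.take i, (S.getD i (0, false)).1)}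
      = ↑(Finset.range S.length) := by
    ext i
    simpa using fun hi => hS i hi
  rw [pmistakes, hset, Set.ncard_coe_finset, Finset.card_range]

section Learner

variable {L : Sample × ℕ →. Bool} {cd : Code}

theorem exists_stage_of_mem (hcd : Computes cd L) {h : Hist} {b : Bool}
    (hb : b ∈ L (stageSample cd h, diagPoint cd h)) : ∃ t, Stage cd h (!b, t) := by
  obtain ⟨t, ht⟩ := exists_haltsAt (hcd _ ▸ Part.mem_map encode hb)
  exact ⟨t, by simpa [Stage] using ht⟩

theorem not_mem_of_stage (hcd : Computes cd L) {h : Hist} {e : Bool × ℕ} (he : Stage cd h e) :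
    e.1 ∉ L (stageSample cd h, diagPoint cd h) := by
  intro hmem
  have hout := evaln_sound he.1
  rw [hcd] at hout
  obtain ⟨b, hb, hbe⟩ := (Part.mem_map_iff encode).1 hout
  have := Part.mem_unique hmem hb
  simp [encode_injective hbe] at this

theorem exists_valid (hcd : Computes cd L)
    (hdom : ∀ S x, Realizable diagClass S → (L (S, x)).Dom) (n : ℕ) :
    ∃ h, Valid cd h ∧ h.length = n := by
  induction n with
  | zero => exact ⟨[], valid_nil, rfl⟩
  | succ n ih =>
    obtain ⟨h, hv, rfl⟩ := ih
    obtain ⟨b, hb⟩ := Part.dom_iff_mem.1 (hdom _ (diagPoint cd h) (realizable_stageSample hv))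
    obtain ⟨t, ht⟩ := exists_stage_of_mem hcd hb
    exact ⟨h ++ [(!b, t)], valid_concat.2 ⟨hv, ht⟩, by simp⟩

theorem pmistakes_stageSample (hcd : Computes cd L) {h : Hist} (hv : Valid cd h) :
    pmistakes L (stageSample cd h) = h.length := by
  rw [← length_stageSample cd h]
  refine pmistakes_eq_length fun i hi => ?_
  rw [length_stageSample] at hi
  rw [stageSample_take, stageSample_getD cd hi]
  exact not_mem_of_stage hcd (valid_iff_forall_lt.1 hv i hi)

end Learner

theorem not_learnable (d : ℕ) :
    ¬ ∃ L : Sample × ℕ →. Bool, Partrec L ∧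
      (∀ (S : Sample) (x : ℕ), Realizable diagClass S → (L (S, x)).Dom) ∧
      (∀ S : Sample, Realizable diagClass S → pmistakes L S ≤ d) := by
  rintro ⟨L, hL, hdom, hmist⟩
  obtain ⟨cd, hcd⟩ := exists_computes hL
  obtain ⟨h, hv, hlen⟩ := exists_valid hcd hdom (d + 1)
  have := hmist _ (realizable_stageSample hv)
  rw [pmistakes_stageSample hcd hv] at this
  omega

/-! ### A computable strategy reaching a dead leaf -/

/-- The value of `diagFun cd` at `diagPoint cd h'` forced by `diagFun cd (diagPoint cd h) = true`;
`none` when `h'` strictly extends `h`. -/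
def forcedVal (h h' : Hist) : Option Bool :=
  if h' = h then some true
  else if h' <+: h then some (h.getD h'.length (false, 0)).1
  else if h <+: h' then none
  else some false

def forcedValAt (cd : Code) (h : Hist) : Option (Code × Hist) → Option Bool
  | some (cd', h') => if cd' = cd then forcedVal h h' else some false
  | none => some false

section Forced

variable {cd : Code} {h : Hist}

theorem diagFun_diagPoint_of_forcedVal {h' : Hist} {b : Bool}
    (hdiag : diagFun cd (diagPoint cd h) = true) (hb : forcedVal h h' = some b) :
    diagFun cd (diagPoint cd h') = b := by
  obtain ⟨t, hv⟩ := diagFun_diagPoint_eq_true_iff.1 hdiag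
  unfold forcedVal at hb
  split_ifs at hb with heq hpre hpre'
  · obtain rfl := Option.some.inj hb
    exact heq ▸ hdiag
  · obtain rfl := Option.some.inj hb
    have hlt : h'.length < h.length :=
      lt_of_le_of_ne hpre.length_le fun hl => heq (hpre.eq_of_length hl)
    rw [List.getD_eq_getElem _ _ hlt]
    exact diagFun_diagPoint_of_prefix (hv.of_prefix (List.prefix_append _ _))
      (concat_getElem_prefix hpre hlt)
  · obtain rfl : b = false := by simpa using hb.symm
    refine Bool.eq_false_iff.2 fun hdiag' => ?_
    obtain ⟨t', hv'⟩ := diagFun_diagPoint_eq_true_iff.1 hdiag'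
    rcases hv.prefix_or_prefix hv' with hp | hp
    · exact hpre' (prefix_of_concat_prefix_concat hp)
    · exact hpre (prefix_of_concat_prefix_concat hp)

theorem diagFun_of_forcedValAt {x : ℕ} {b : Bool} (hdiag : diagFun cd (diagPoint cd h) = true)
    (hb : forcedValAt cd h (diagPoint? x) = some b) : diagFun cd x = b := by
  rcases hx : diagPoint? x with _ | ⟨cd', h'⟩ <;> rw [hx] at hb
  · obtain rfl := Option.some.inj hb
    exact diagFun_eq_false_of_forall_ne (by simp [hx])
  · rw [diagPoint?_eq_some.1 hx]
    simp only [forcedValAt] at hb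
    split_ifs at hb with hcd
    · subst hcd
      exact diagFun_diagPoint_of_forcedVal hdiag hb
    · obtain rfl := Option.some.inj hb
      exact diagFun_eq_false_of_forall_ne (by simp [diagPoint?_diagPoint, hcd])

theorem forcedValAt_eq_none {y : Option (Code × Hist)} (hy : forcedValAt cd h y = none) :
    ∃ h', y = some (cd, h') ∧ h <+: h' ∧ h.length < h'.length := by
  rcases y with _ | ⟨cd', h'⟩
  · cases hy
  · simp only [forcedValAt] at hy
    split_ifs at hy with hcd
    unfold forcedVal at hy
    split_ifs at hy with heq hpre hpre'
    subst hcd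
    exact ⟨h', rfl, hpre',
      lt_of_le_of_ne hpre'.length_le fun hl => heq (hpre'.eq_of_length hl).symm⟩

end Forced

def AgreesAlong (f : ℕ → Bool) (x₁ xt xf : ℕ) (e : Bool × Bool) : Prop :=
  f x₁ = e.1 ∧ f (cond e.1 xt xf) = e.2

/-- Against `diagFun cd` with `diagFun cd (diagPoint cd h₀) = true`: contradict a forced value at
`x₁`; otherwise take `e.1 = true` and contradict a value forced by `x₁` at `xt`; otherwise `xt`
lies strictly above `x₁`, and either its history is valid and certifies `diagFun cd x₁ = true`, or
`diagFun cd x₁ = diagFun cd xt = true` is impossible. -/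
def avoidDiag (cd : Code) (h₀ : Hist) (y₁ y₂ : Option (Code × Hist)) : Bool × Bool :=
  match forcedValAt cd h₀ y₁ with
  | some b => (!b, true)
  | none =>
    let h₁ := (y₁.map Prod.snd).getD []
    match forcedValAt cd h₁ y₂ with
    | some b => (true, !b)
    | none =>
      let h₂ := (y₂.map Prod.snd).getD []
      if Valid cd h₂ ∧ (h₂.getD h₁.length (false, 0)).1 = true then (false, true) else (true, true)

theorem not_agreesAlong_avoidDiag {cd : Code} {h₀ : Hist} {x₁ xt xf : ℕ}
    (hdiag : diagFun cd (diagPoint cd h₀) = true) :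
    ¬ AgreesAlong (diagFun cd) x₁ xt xf (avoidDiag cd h₀ (diagPoint? x₁) (diagPoint? xt)) := by
  rintro ⟨h1, h2⟩
  unfold avoidDiag at h1 h2
  rcases hk₁ : forcedValAt cd h₀ (diagPoint? x₁) with _ | b <;> simp only [hk₁] at h1 h2
  · obtain ⟨h₁, hx₁, -, -⟩ := forcedValAt_eq_none hk₁
    simp only [hx₁, Option.map_some, Option.getD_some] at h1 h2
    rw [diagPoint?_eq_some.1 hx₁] at h1
    rcases hk₂ : forcedValAt cd h₁ (diagPoint? xt) with _ | b <;> simp only [hk₂] at h1 h2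
    · obtain ⟨h₂, hx₂, hpre₂, hlt₂⟩ := forcedValAt_eq_none hk₂
      simp only [hx₂, Option.map_some, Option.getD_some] at h1 h2
      rw [diagPoint?_eq_some.1 hx₂] at h2
      have reveal (hv : Valid cd h₂) :
          diagFun cd (diagPoint cd h₁) = (h₂.getD h₁.length (false, 0)).1 := by
        rw [List.getD_eq_getElem _ _ hlt₂]
        exact diagFun_diagPoint_of_prefix hv (concat_getElem_prefix hpre₂ hlt₂)
      split_ifs at h1 h2 with hcert
      · rw [reveal hcert.1, hcert.2] at h1
        simp at h1
      · obtain ⟨t, hv⟩ := diagFun_diagPoint_eq_true_iff.1 h2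
        have hv₂ := hv.of_prefix (List.prefix_append _ _)
        exact hcert ⟨hv₂, reveal hv₂ ▸ h1⟩
    · simp [diagFun_of_forcedValAt h1 hk₂] at h2
  · simp [diagFun_of_forcedValAt hdiag hk₁] at h1

def avoidPair (f g : ℕ → Bool) (x₁ xt xf : ℕ) : Bool × Bool :=
  if f x₁ = g x₁ then (!f x₁, true) else (f x₁, !f (cond (f x₁) xt xf))

theorem not_agreesAlong_avoidPair {f g k : ℕ → Bool} (hk : k = f ∨ k = g) (x₁ xt xf : ℕ) :
    ¬ AgreesAlong k x₁ xt xf (avoidPair f g x₁ xt xf) := by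
  rintro ⟨h1, h2⟩
  unfold avoidPair at h1 h2
  split_ifs at h1 h2 with hfg
  · rcases hk with rfl | rfl <;> simp [hfg] at h1
  · rcases hk with rfl | rfl
    · simp at h2
    · exact hfg h1.symm

theorem eq_of_gadget_eq_true {b₀ b₁ : Bool} {x : ℕ} (h : gadget b₀ b₁ x = true) :
    b₀ = (x != gadgetPoint [false]) := by
  rcases gadget_eq_true_iff.1 h with ⟨rfl, rfl⟩ | ⟨rfl, -⟩
  · simp [gadgetPoint_inj]
  · cases b₀ <;> simp [gadgetPoint_inj]

def avoidGadgets (x₀ x₁ xt xf : ℕ) : Bool × Bool :=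
  avoidPair (gadget (x₀ != gadgetPoint [false]) false) (gadget (x₀ != gadgetPoint [false]) true)
    x₁ xt xf

theorem not_agreesAlong_avoidGadgets {b₀ b₁ : Bool} {x₀ : ℕ} (h : gadget b₀ b₁ x₀ = true)
    (x₁ xt xf : ℕ) : ¬ AgreesAlong (gadget b₀ b₁) x₁ xt xf (avoidGadgets x₀ x₁ xt xf) :=
  not_agreesAlong_avoidPair (by cases b₁ <;> simp [eq_of_gadget_eq_true h]) x₁ xt xf

def avoid (x₀ x₁ xt xf : ℕ) : Bool × Bool :=
  match diagPoint? x₀ with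
  | some (cd, h₀) => avoidDiag cd h₀ (diagPoint? x₁) (diagPoint? xt)
  | none => avoidGadgets x₀ x₁ xt xf

theorem not_agreesAlong_avoid {f : ℕ → Bool} (hf : f ∈ diagClass) {x₀ : ℕ} (h₀ : f x₀ = true)
    (x₁ xt xf : ℕ) : ¬ AgreesAlong f x₁ xt xf (avoid x₀ x₁ xt xf) := by
  rcases hf with ⟨⟨b₀, b₁⟩, rfl⟩ | ⟨cd, rfl⟩
  · have : diagPoint? x₀ = none := by
      rcases gadget_eq_true_iff.1 h₀ with ⟨rfl, -⟩ | ⟨rfl, -⟩ <;> exact diagPoint?_gadgetPoint _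
    simp only [avoid, this]
    exact not_agreesAlong_avoidGadgets h₀ x₁ xt xf
  · obtain ⟨h, t, rfl, -⟩ := diagFun_eq_true_iff.1 h₀
    simp only [avoid, diagPoint?_diagPoint]
    exact not_agreesAlong_avoidDiag h₀

def deadLeaf (T : TreeCode) : List Bool :=
  let e := avoid (nodeLabel T []) (nodeLabel T [true]) (nodeLabel T [true, true])
    (nodeLabel T [true, false])
  [true, e.1, e.2]

theorem not_realizable_deadLeaf (T : TreeCode) :
    ¬ Realizable diagClass (branchSample T (deadLeaf T)) := by
  rintro ⟨f, hf, hcons⟩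
  set e := avoid (nodeLabel T []) (nodeLabel T [true]) (nodeLabel T [true, true])
    (nodeLabel T [true, false])
  have hsample : branchSample T (deadLeaf T) =
      [(nodeLabel T [], true), (nodeLabel T [true], e.1), (nodeLabel T [true, e.1], e.2)] := rfl
  have hnode : nodeLabel T [true, e.1] = cond e.1 (nodeLabel T [true, true])
      (nodeLabel T [true, false]) := by cases e.1 <;> rfl
  rw [hsample] at hcons
  refine not_agreesAlong_avoid hf (hcons (nodeLabel T [], true) (by simp)) _ _ _
    ⟨hcons (nodeLabel T [true], e.1) (by simp), ?_⟩
  rw [← hnode]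
  exact hcons (_, e.2) (by simp only [List.mem_cons]; tauto)

/-! ### Computability of the strategy -/

section Computability

open Primrec

theorem primrec_nodeLabel : Primrec₂ nodeLabel :=
  (option_getD.comp (listLookup.comp snd fst) (const 0)).of_eq fun _ => by
    simp only [nodeLabel]; congr; exact lawful_beq_subsingleton _ _

theorem primrec_gadgetPoint : Primrec gadgetPoint :=
  Primrec.encode.comp sumInl

theorem primrec_diagPoint : Primrec₂ diagPoint :=
  Primrec.encode.comp₂ (sumInr.comp₂ Primrec₂.pair)

theorem primrec_diagPoint? : Primrec diagPoint? :=
  option_bind Primrec.decode₂ ((sumCasesOn snd (const none).to₂ (option_some.comp snd).to₂).of_eq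
    fun ⟨_, p⟩ => by cases p <;> rfl)

theorem primrecRel_prefix {α : Type*} [Primcodable α] :
    PrimrecRel (fun l₁ l₂ : List α => l₁ <+: l₂) :=
  (Primrec.eq.comp fst (list_take.comp (list_length.comp fst) snd)).of_eq
    fun _ => List.prefix_iff_eq_take.symm

theorem primrec_forcedVal : Primrec₂ forcedVal :=
  Primrec.ite (Primrec.eq.comp snd fst) (const _) <|
  Primrec.ite (primrecRel_prefix.comp snd fst)
    (option_some.comp (fst.comp ((list_getD _).comp fst (list_length.comp snd)))) <|
  Primrec.ite (primrecRel_prefix.comp fst snd) (const none) (const _)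

theorem primrec_forcedValAt :
    Primrec fun p : Code × Hist × Option (Code × Hist) => forcedValAt p.1 p.2.1 p.2.2 :=
  (option_casesOn (snd.comp snd) (const (some false))
    (Primrec.ite (Primrec.eq.comp (fst.comp snd) (fst.comp fst))
      (primrec_forcedVal.comp (fst.comp (snd.comp fst)) (snd.comp snd))
      (const (some false))).to₂).of_eq
    fun ⟨_, _, y⟩ => by rcases y with _ | ⟨_, _⟩ <;> rfl

theorem primrecPred_haltsAt :
    PrimrecPred fun p : Code × ℕ × ℕ × ℕ => HaltsAt p.1 p.2.1 p.2.2.1 p.2.2.2 :=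
  (Primrec.eq.comp (primrec_evaln.comp (pair (pair (fst.comp (snd.comp snd)) fst) (fst.comp snd)))
      (option_some.comp (snd.comp (snd.comp snd)))).and
    (Primrec.eq.comp (primrec_evaln.comp (pair (pair (nat_sub.comp (fst.comp (snd.comp snd))
      (const 1)) fst) (fst.comp snd))) (const none))

theorem primrec_stageSample : Primrec₂ stageSample :=
  list_map (list_range.comp (list_length.comp snd))
    (pair (primrec_diagPoint.comp (fst.comp fst) (list_take.comp snd (snd.comp fst)))
      (fst.comp ((list_getD _).comp (snd.comp fst) snd)))

theorem primrecPred_stage :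
    PrimrecPred fun p : Code × Hist × (Bool × ℕ) => Stage p.1 p.2.1 p.2.2 :=
  primrecPred_haltsAt.comp (pair fst (pair
    (Primrec.encode.comp (pair (primrec_stageSample.comp fst (fst.comp snd))
      (primrec_diagPoint.comp fst (fst.comp snd))))
    (pair (snd.comp (snd.comp snd))
      (Primrec.encode.comp (Primrec.not.comp (fst.comp (snd.comp snd)))))))

theorem primrecRel_valid : PrimrecRel Valid :=
  ((PrimrecRel.forall_mem_list
    (R := fun j (p : Code × Hist) => Stage p.1 (p.2.take j) (p.2.getD j (false, 0)))
    (primrecPred_stage.comp (pair (fst.comp snd) (pair (list_take.comp fst (snd.comp snd))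
      ((list_getD _).comp (snd.comp snd) fst))))).comp
    (list_range.comp (list_length.comp snd)) Primrec.id).of_eq
    fun _ => by simp only [List.mem_range]; exact valid_iff_forall_lt.symm

theorem primrec_avoidDiag :
    Primrec fun p : Code × Hist × Option (Code × Hist) × Option (Code × Hist) =>
      avoidDiag p.1 p.2.1 p.2.2.1 p.2.2.2 := by
  have h₁ : Primrec fun p : Code × Hist × Option (Code × Hist) × Option (Code × Hist) =>
      (p.2.2.1.map Prod.snd).getD [] :=
    option_getD.comp (option_map (fst.comp (snd.comp snd)) (snd.comp snd).to₂) (const [])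
  have h₂ : Primrec fun p : Code × Hist × Option (Code × Hist) × Option (Code × Hist) =>
      (p.2.2.2.map Prod.snd).getD [] :=
    option_getD.comp (option_map (snd.comp (snd.comp snd)) (snd.comp snd).to₂) (const [])
  have certified := (primrecRel_valid.comp fst h₂).and
    (Primrec.eq.comp (fst.comp ((list_getD (false, 0)).comp h₂ (list_length.comp h₁)))
      (const true))
  have second := option_casesOn
    (primrec_forcedValAt.comp (pair fst (pair h₁ (snd.comp (snd.comp snd)))))
    (Primrec.ite certified (const (false, true)) (const (true, true)))
    (pair (const true) (Primrec.not.comp snd)).to₂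
  refine (option_casesOn
    (primrec_forcedValAt.comp (pair fst (pair (fst.comp snd) (fst.comp (snd.comp snd)))))
    second (pair (Primrec.not.comp snd) (const true)).to₂).of_eq fun p => ?_
  dsimp only [avoidDiag]
  cases forcedValAt p.1 p.2.1 p.2.2.1 <;>
    cases forcedValAt p.1 ((p.2.2.1.map Prod.snd).getD []) p.2.2.2 <;> rfl

theorem primrec_gadget : Primrec fun p : Bool × Bool × ℕ => gadget p.1 p.2.1 p.2.2 :=
  Primrec.or.comp (Primrec.and.comp (Primrec.beq.comp (snd.comp snd) (const _)) fst)
    (Primrec.and.comp (Primrec.beq.comp (snd.comp snd)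
      (primrec_gadgetPoint.comp (list_cons.comp fst (const [])))) (fst.comp snd))

theorem primrec_avoidPair {α : Type*} [Primcodable α] {f g : α → ℕ → Bool} {x₁ xt xf : α → ℕ}
    (hf : Primrec₂ f) (hg : Primrec₂ g) (h₁ : Primrec x₁) (ht : Primrec xt) (hf' : Primrec xf) :
    Primrec fun a => avoidPair (f a) (g a) (x₁ a) (xt a) (xf a) :=
  Primrec.ite (Primrec.eq.comp (hf.comp .id h₁) (hg.comp .id h₁))
    (pair (Primrec.not.comp (hf.comp .id h₁)) (const true))
    (pair (hf.comp .id h₁) (Primrec.not.comp (hf.comp .id (cond (hf.comp .id h₁) ht hf'))))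

theorem primrec_avoid : Primrec fun p : ℕ × ℕ × ℕ × ℕ => avoid p.1 p.2.1 p.2.2.1 p.2.2.2 := by
  have hb₀ : Primrec fun p : ℕ × ℕ × ℕ × ℕ => p.1 != gadgetPoint [false] :=
    Primrec.not.comp (Primrec.beq.comp fst (const _))
  have hgadgets : Primrec fun p : ℕ × ℕ × ℕ × ℕ => avoidGadgets p.1 p.2.1 p.2.2.1 p.2.2.2 :=
    primrec_avoidPair (primrec_gadget.comp (pair (hb₀.comp fst) (pair (const false) snd)))
      (primrec_gadget.comp (pair (hb₀.comp fst) (pair (const true) snd)))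
      (fst.comp snd) (fst.comp (snd.comp snd)) (snd.comp (snd.comp snd))
  refine (option_casesOn (primrec_diagPoint?.comp fst) hgadgets
    (primrec_avoidDiag.comp (pair (fst.comp snd) (pair (snd.comp snd)
      (pair (primrec_diagPoint?.comp (fst.comp (snd.comp fst)))
        (primrec_diagPoint?.comp (fst.comp (snd.comp (snd.comp fst)))))))).to₂).of_eq fun p => ?_
  dsimp only [avoid]
  rcases diagPoint? p.1 with _ | ⟨_, _⟩ <;> rfl

theorem computable_deadLeaf : Computable deadLeaf := by
  have hnode (q : List Bool) : Primrec fun T : TreeCode => nodeLabel T q :=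
    primrec_nodeLabel.comp .id (const q)
  have he := primrec_avoid.comp (pair (hnode []) (pair (hnode [true])
    (pair (hnode [true, true]) (hnode [true, false]))))
  exact (list_cons.comp (const true) (list_cons.comp (fst.comp he)
    (list_cons.comp (snd.comp he) (const [])))).to_comp

end Computability

/-! ### The gadgets shatter a tree of depth two -/

def gadgetTree : TreeCode :=
  [([], gadgetPoint []), ([true], gadgetPoint [true]), ([false], gadgetPoint [false])]

theorem consistent_gadget_branchSample {p : List Bool} (hp : p.length ≤ 2) :
    Consistent (gadget (p.getD 0 false) (p.getD 1 false)) (branchSample gadgetTree p) := by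
  match p, hp with
  | [], _ => simp [Consistent, branchSample]
  | [a], _ => simp [Consistent, branchSample, nodeLabel, gadgetTree, gadget]
  | [a, b], _ =>
    rw [show branchSample gadgetTree [a, b] =
      [(nodeLabel gadgetTree [], a), (nodeLabel gadgetTree [a], b)] from rfl]
    cases a <;> simp [Consistent, nodeLabel, gadgetTree, gadget, gadgetPoint_inj, List.lookup]

theorem not_eldimLe_of_le_one {d : ℕ} (hd : d ≤ 1) : ¬ EldimLe diagClass d := by
  rintro ⟨A, -, hA⟩
  obtain ⟨hlen, hnr⟩ := hA gadgetTree
  exact hnr ⟨_, Or.inl ⟨((A gadgetTree).getD 0 false, (A gadgetTree).getD 1 false), rfl⟩,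
    consistent_gadget_branchSample (by omega)⟩

end Diagonal

theorem stmt18 :
    ∃ H : Set (ℕ → Bool), Eldim H = 2 ∧
      ∀ d : ℕ, ¬ ∃ L : Sample × ℕ →. Bool, Partrec L ∧
        (∀ (S : Sample) (x : ℕ), Realizable H S → (L (S, x)).Dom) ∧
        (∀ S : Sample, Realizable H S → pmistakes L S ≤ d) := by
  refine ⟨Diagonal.diagClass, Diagonal.eldim_eq_of_eldimLe (d := 2) ?_ ?_, Diagonal.not_learnable⟩
  · exact ⟨Diagonal.deadLeaf, Diagonal.computable_deadLeaf,
      fun T => ⟨rfl, Diagonal.not_realizable_deadLeaf T⟩⟩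
  · exact fun k hk => Diagonal.not_eldimLe_of_le_one (by omega)
end
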